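/- arXiv:2108.01963 — 2 statements merged into one kernel-verified Lean document; each statement's English description precedes it below -/
import Mathlib

section
/- Let T be a rooted tree with labeling L satisfying L(v) > L(p(v)) for every non-root v, and let n' > max_v L(v). In the convergecast schedule where each non-root vertex v is awake in rounds n' − L(v) and n' − L(p(v)), every vertex v has received the information from all vertices in its subtree by round n' − L(v); in particular the root receives the information of the whole tree. -/
section
variable {V : Type*}

/-- The convergecast schedule of a DLT with time horizon `n'`: each non-root
vertex `v` is awake exactly in rounds `n' - L v` and `n' - L (p v)`, and the
root `r` is awake exactly in round `n' - L r`. -/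
def cAwake [DecidableEq V] (r : V) (p : V → V) (L : V → ℕ) (n' : ℕ) (v : V) (t : ℕ) : Prop :=
  if v = r then t = n' - L r else (t = n' - L v ∨ t = n' - L (p v))

section Convergecast

variable [DecidableEq V] {r : V} {p : V → V} {L : V → ℕ} {n' : ℕ}

theorem cAwake_own_round (v : V) : cAwake r p L n' v (n' - L v) := by
  by_cases hv : v = r <;> simp [cAwake, hv]

theorem cAwake_parent_round {c : V} (hc : c ≠ r) : cAwake r p L n' c (n' - L (p c)) := by
  simp [cAwake, hc]

theorem knows_parent_of_knows_child (knows : V → ℕ → V → Prop)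
    (hmono : ∀ v t t' u, knows v t u → t ≤ t' → knows v t' u)
    (hfwd : ∀ c, c ≠ r → ∀ t u, knows c t u →
      cAwake r p L n' c t → cAwake r p L n' (p c) t → knows (p c) t u)
    {c u : V} (hc : c ≠ r) (hL : L (p c) ≤ L c) (h : knows c (n' - L c) u) :
    knows (p c) (n' - L (p c)) u :=
  hfwd c hc _ u (hmono _ _ _ _ h (Nat.sub_le_sub_left hL n'))
    (cAwake_parent_round hc) (cAwake_own_round (p c))

end Convergecast

theorem stmt_9_general [DecidableEq V] (r : V) (p : V → V) (hr : p r = r)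
    (L : V → ℕ) (n' : ℕ)
    (hL : ∀ v, v ≠ r → L (p v) < L v)
    (knows : V → ℕ → V → Prop)
    (hself : ∀ v t, knows v t v)
    (hmono : ∀ v t t' u, knows v t u → t ≤ t' → knows v t' u)
    (hfwd : ∀ c, c ≠ r → ∀ t u, knows c t u →
      cAwake r p L n' c t → cAwake r p L n' (p c) t → knows (p c) t u) :
    ∀ v u m, p^[m] u = v → knows v (n' - L v) u := by
  rintro v u m rfl
  induction m with
  | zero => exact hself _ _
  | succ m ih =>
    rw [Function.iterate_succ_apply']
    by_cases hroot : p^[m] u = r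
    · rwa [hroot, hr, ← hroot]
    · exact knows_parent_of_knows_child knows hmono hfwd hroot (hL _ hroot).le ih

/-- Convergecast in a DLT.  `T` is a finite rooted tree with root `r`, parent
function `p`, labeling `L` with `L (p v) < L v` for every non-root `v`, and
`n' > L v` for all `v`.  `knows v t u` means `v` holds the information of `u`
by the end of round `t`: every vertex always holds its own information,
knowledge is preserved over time, and in a round in which a non-root vertex
and its parent are both awake (per the schedule `cAwake`) the child transmits
all information it holds to the parent.  Then every vertex `v` has received
the information of all vertices `u` in its subtree (those with `p^[m] u = v`)
by round `n' - L v`; in particular the root receives the information of the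
whole tree. -/
theorem stmt_9 [Fintype V] [DecidableEq V] (r : V) (p : V → V) (hr : p r = r)
    (L : V → ℕ) (n' : ℕ) (hn' : ∀ v, L v < n')
    (hL : ∀ v, v ≠ r → L (p v) < L v)
    (knows : V → ℕ → V → Prop)
    (hself : ∀ v t, knows v t v)
    (hmono : ∀ v t t' u, knows v t u → t ≤ t' → knows v t' u)
    (hfwd : ∀ c, c ≠ r → ∀ t u, knows c t u →
      cAwake r p L n' c t → cAwake r p L n' (p c) t → knows (p c) t u) :
    ∀ v u m, p^[m] u = v → knows v (n' - L v) u :=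
  stmt_9_general r p hr L n' hL knows hself hmono hfwd

end
end

section
/- In the three-step connection procedure on a properly 3-colored rooted forest H — where (1) color-1 vertices connect to their parents and both endpoints become 'connected', (2) then unconnected color-2 vertices with unconnected parents connect to their parents, (3) then likewise for color 3, and (4) finally all still-unconnected vertices connect to their parents — every resulting component has depth at most 3. -/
/-!
Call a vertex *early* if it chooses its parent in one of steps 1–3. The parent of an early
vertex is never early: equal steps would give the edge equal colors, an earlier child would
already have connected the parent, and a later child would require an unconnected parent.
A vertex and its parent are never both unconnected after step 3, since the vertex would then
have chosen in the step of its own color. Now take chosen edges `v₀ → v₁ → v₂ → v₃`. If `v₁`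
is early, `v₂` is connected and not early, so it chooses nothing. Otherwise `v₁` chooses in
step 4, so it is unconnected; then `v₀` is not early, hence is unconnected too, which is
impossible.
-/

section
variable {V : Type*} (par : V → Option V) (col : V → Fin 3)

/-- Step 1: every vertex of color 1 (here color `0`) that has a parent chooses
its parent. -/
def S1 : Set V := {v | col v = 0 ∧ ∃ u, par v = some u}

/-- Vertices marked "connected" after step 1: the choosers and the chosen
parents. -/
def C1 : Set V := S1 par col ∪ {u | ∃ v ∈ S1 par col, par v = some u}

/-- Step 2: every vertex of color 2 (here color `1`) that is not yet connected
and whose parent is not yet connected chooses its parent. -/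
def S2 : Set V := {v | col v = 1 ∧ v ∉ C1 par col ∧ ∃ u, par v = some u ∧ u ∉ C1 par col}

/-- Vertices marked "connected" after step 2. -/
def C2 : Set V := C1 par col ∪ S2 par col ∪ {u | ∃ v ∈ S2 par col, par v = some u}

/-- Step 3: likewise for color 3 (here color `2`). -/
def S3 : Set V := {v | col v = 2 ∧ v ∉ C2 par col ∧ ∃ u, par v = some u ∧ u ∉ C2 par col}

/-- Vertices marked "connected" after step 3. -/
def C3 : Set V := C2 par col ∪ S3 par col ∪ {u | ∃ v ∈ S3 par col, par v = some u}

/-- Step 4: every vertex still unconnected after steps 1–3 that has a parent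
chooses its parent. -/
def S4 : Set V := {v | v ∉ C3 par col ∧ ∃ u, par v = some u}

/-- The edge from `v` to its parent `u` is chosen during steps 1–3. -/
def chosen13 (v u : V) : Prop :=
  par v = some u ∧ v ∈ S1 par col ∪ S2 par col ∪ S3 par col

/-- The edge from `v` to its parent `u` is chosen during the whole procedure
(steps 1–4). -/
def chosen (v u : V) : Prop :=
  par v = some u ∧ v ∈ S1 par col ∪ S2 par col ∪ S3 par col ∪ S4 par col

end

section
variable {V : Type*} {par : V → Option V} {col : V → Fin 3} {v u : V}

lemma C1_subset_C2 : C1 par col ⊆ C2 par col := fun _ h => Or.inl (Or.inl h)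

lemma C2_subset_C3 : C2 par col ⊆ C3 par col := fun _ h => Or.inl (Or.inl h)

lemma C1_subset_C3 : C1 par col ⊆ C3 par col := C1_subset_C2.trans C2_subset_C3

lemma parent_notMem_C1_of_mem_S2 (hv : v ∈ S2 par col) (hp : par v = some u) :
    u ∉ C1 par col := by
  obtain ⟨-, -, w, hw, hwC⟩ := hv
  rw [hp, Option.some_inj] at hw
  exact hw ▸ hwC

lemma parent_notMem_C2_of_mem_S3 (hv : v ∈ S3 par col) (hp : par v = some u) :
    u ∉ C2 par col := by
  obtain ⟨-, -, w, hw, hwC⟩ := hv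
  rw [hp, Option.some_inj] at hw
  exact hw ▸ hwC

lemma mem_C3_of_chosen13 (h : chosen13 par col v u) : v ∈ C3 par col ∧ u ∈ C3 par col := by
  obtain ⟨hp, (hv | hv) | hv⟩ := h
  · exact ⟨C1_subset_C3 (Or.inl hv), C1_subset_C3 (Or.inr ⟨v, hv, hp⟩)⟩
  · exact ⟨C2_subset_C3 (Or.inl (Or.inr hv)), C2_subset_C3 (Or.inr ⟨v, hv, hp⟩)⟩
  · exact ⟨Or.inl (Or.inr hv), Or.inr ⟨v, hv, hp⟩⟩

lemma mem_C3_or_mem_C3_of_par_eq (hp : par v = some u) : v ∈ C3 par col ∨ u ∈ C3 par col := by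
  by_contra! ⟨hv, hu⟩
  have hv2 : v ∉ C2 par col := fun h => hv (C2_subset_C3 h)
  have hu2 : u ∉ C2 par col := fun h => hu (C2_subset_C3 h)
  have hv1 : v ∉ C1 par col := fun h => hv2 (C1_subset_C2 h)
  have hu1 : u ∉ C1 par col := fun h => hu2 (C1_subset_C2 h)
  apply hv
  obtain hc | hc | hc : col v = 0 ∨ col v = 1 ∨ col v = 2 := by omega
  · exact (mem_C3_of_chosen13 ⟨hp, Or.inl (Or.inl ⟨hc, u, hp⟩)⟩).1
  · exact (mem_C3_of_chosen13 ⟨hp, Or.inl (Or.inr ⟨hc, hv1, u, hp, hu1⟩)⟩).1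
  · exact (mem_C3_of_chosen13 ⟨hp, Or.inr ⟨hc, hv2, u, hp, hu2⟩⟩).1

lemma notMem_S123_of_chosen13 (hproper : ∀ v u, par v = some u → col v ≠ col u)
    (h : chosen13 par col v u) : u ∉ S1 par col ∪ S2 par col ∪ S3 par col := by
  obtain ⟨hp, hv⟩ := h
  rintro ((hu | hu) | hu)
  · have huC : u ∈ C1 par col := Or.inl hu
    rcases hv with (hv | hv) | hv
    · exact hproper v u hp (hv.1.trans hu.1.symm)
    · exact parent_notMem_C1_of_mem_S2 hv hp huC
    · exact parent_notMem_C2_of_mem_S3 hv hp (C1_subset_C2 huC)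
  · rcases hv with (hv | hv) | hv
    · exact hu.2.1 (Or.inr ⟨v, hv, hp⟩)
    · exact hproper v u hp (hv.1.trans hu.1.symm)
    · exact parent_notMem_C2_of_mem_S3 hv hp (Or.inl (Or.inr hu))
  · rcases hv with (hv | hv) | hv
    · exact hu.2.1 (C1_subset_C2 (Or.inr ⟨v, hv, hp⟩))
    · exact hu.2.1 (Or.inr ⟨v, hv, hp⟩)
    · exact hproper v u hp (hv.1.trans hu.1.symm)

end

/-- Three-step connection procedure on a properly 3-colored rooted forest `H`
(given by a parent function `par` and coloring `col`): color-1 vertices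
connect to their parents and both endpoints become connected; then
unconnected color-2 vertices with unconnected parents connect to their
parents; then likewise for color 3; finally all still-unconnected vertices
connect to their parents.  Every component of chosen edges has depth at
most 3: there is no directed path of three chosen edges. -/
theorem stmt_11 {V : Type*} (par : V → Option V) (col : V → Fin 3)
    (hproper : ∀ v u, par v = some u → col v ≠ col u) :
    ¬ ∃ v0 v1 v2 v3 : V,
        chosen par col v0 v1 ∧ chosen par col v1 v2 ∧ chosen par col v2 v3 := by
  rintro ⟨v0, v1, v2, v3, ⟨hp0, h0⟩, ⟨hp1, h1⟩, ⟨-, h2⟩⟩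
  rcases h1 with h1 | h1
  · have h12 : chosen13 par col v1 v2 := ⟨hp1, h1⟩
    rcases h2 with h2 | h2
    · exact notMem_S123_of_chosen13 hproper h12 h2
    · exact h2.1 (mem_C3_of_chosen13 h12).2
  · rcases h0 with h0 | h0
    · exact h1.1 (mem_C3_of_chosen13 ⟨hp0, h0⟩).2
    · exact (mem_C3_or_mem_C3_of_par_eq hp0).elim h0.1 h1.1
end
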